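/- arXiv:1611.07509 — 8 statements merged into one kernel-verified Lean document; each statement's English description precedes it below -/
import Mathlib

section
/- Characterization of S_π (correctness of the membership subroutine in algorithm PSE-DD): assume the graph is acyclic and let S be a child of C. Then S ∈ S_π — i.e., the arc (C,S) occurs in some walk from C to E passing through R — if and only if there exists r ∈ R with Relation.ReflTransGen A S r and Relation.ReflTransGen A r E (that is, some walk from S to E passes through R, allowing S itself to lie in R). -/
/-!
Acyclicity forces `C` to occur in a walk from `C` only as its first vertex, so a walk from `C`
containing the arc `(C, S)` is `C` followed by a walk from `S`; as `C ∉ R`, its vertex in `R`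
lies on the walk from `S`. Conversely, walks `S ⟶* r ⟶* E` glue, and prepending `C` gives a walk
from `C` through `R` that starts with the arc `(C, S)`.
-/

/-- `S ∈ S_π`: `S` is a child of `C` and the arc `(C,S)` occurs in some walk from
`C` to `E` passing through the set `R` of redlining attributes. A walk from `C` to
`E` is a list `l` with `List.Chain A C l` whose last vertex of `C :: l` is `E`;
its vertices are the entries of `C :: l`. -/
def memSpi {V : Type*} (A : V → V → Prop) (C E : V) (R : Set V) (S : V) : Prop :=
  A C S ∧ ∃ l : List V, List.Chain A C l ∧
    (C :: l).getLast (List.cons_ne_nil C l) = E ∧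
    [C, S] <:+: (C :: l) ∧ ∃ x ∈ C :: l, x ∈ R

namespace List

variable {α : Type*} {r : α → α → Prop} {a b c x : α} {l : List α}

theorem IsChain.relationReflTransGen_of_mem (h : IsChain r (a :: l)) (hx : x ∈ a :: l) :
    Relation.ReflTransGen r a x :=
  h.induction _ _ (fun _ _ hyz hy => hy.tail hyz) (fun _ => .refl) x hx

theorem IsChain.relationReflTransGen_getLast_of_mem (h : IsChain r (a :: l)) (hx : x ∈ a :: l) :
    Relation.ReflTransGen r x ((a :: l).getLast (cons_ne_nil a l)) :=
  h.backwards_cons_induction (Relation.ReflTransGen r · _) l rfl (fun _ _ hyz hz => hz.head hyz)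
    .refl x hx

theorem IsChain.notMem_of_not_transGen_self (hr : ¬ Relation.TransGen r a a)
    (h : IsChain r (a :: l)) : a ∉ l := by
  intro ha
  cases l with
  | nil => exact not_mem_nil ha
  | cons b t =>
    obtain ⟨hab, hbt⟩ := isChain_cons_cons.1 h
    exact hr (.head' hab (hbt.relationReflTransGen_of_mem ha))

theorem exists_eq_cons_of_pair_infix_cons (h : [a, b] <:+: a :: l) (ha : a ∉ l) :
    ∃ t, l = b :: t := by
  obtain ⟨s, t, hst⟩ := h
  cases s with
  | nil => exact ⟨t, (cons.inj hst).2.symm⟩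
  | cons _ s => exact absurd (by simp [← (cons.inj hst).2]) ha

theorem exists_isChain_cons_mem_of_relationReflTransGen {p : α → Prop}
    (hab : Relation.ReflTransGen r a b) (hb : p b) (hbc : Relation.ReflTransGen r b c) :
    ∃ l, IsChain r (a :: l) ∧ (a :: l).getLast (cons_ne_nil a l) = c ∧
      ∃ x ∈ a :: l, p x := by
  induction hab using Relation.ReflTransGen.head_induction_on with
  | refl =>
    obtain ⟨l, hl, hlast⟩ := exists_isChain_cons_of_relationReflTransGen hbc
    exact ⟨l, hl, hlast, b, mem_cons_self, hb⟩
  | head hab' _ ih =>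
    obtain ⟨l, hl, hlast, x, hx, hpx⟩ := ih
    exact ⟨_ :: l, hl.cons_cons hab', by rwa [getLast_cons_cons], x, mem_cons_of_mem _ hx, hpx⟩

end List

theorem memSpi_iff_general {V : Type*} (A : V → V → Prop) (C E : V) (R : Set V)
    (hacyc : ∀ v : V, ¬ Relation.TransGen A v v)
    (hCR : C ∉ R)
    (S : V) (hS : A C S) :
    memSpi A C E R S ↔
      ∃ r ∈ R, Relation.ReflTransGen A S r ∧ Relation.ReflTransGen A r E := by
  constructor
  · rintro ⟨-, l, hl : List.IsChain A (C :: l), hlast, hCS, x, hx, hxR⟩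
    obtain ⟨t, rfl⟩ :=
      List.exists_eq_cons_of_pair_infix_cons hCS (hl.notMem_of_not_transGen_self (hacyc C))
    have hSt : List.IsChain A (S :: t) := (List.isChain_cons_cons.1 hl).2
    have hxS : x ∈ S :: t := (List.mem_cons.1 hx).resolve_left (by rintro rfl; exact hCR hxR)
    rw [List.getLast_cons_cons] at hlast
    exact ⟨x, hxR, hSt.relationReflTransGen_of_mem hxS,
      hlast ▸ hSt.relationReflTransGen_getLast_of_mem hxS⟩
  · rintro ⟨r, hrR, hSr, hrE⟩
    obtain ⟨l, hl, hlast, x, hx, hxR⟩ :=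
      List.exists_isChain_cons_mem_of_relationReflTransGen hSr hrR hrE
    exact ⟨hS, S :: l, hl.cons_cons hS, by rwa [List.getLast_cons_cons], ⟨[], l, rfl⟩,
      x, List.mem_cons_of_mem _ hx, hxR⟩

/-- Characterization of `S_π` (correctness of the membership subroutine of
algorithm PSE-DD): in an acyclic graph, a child `S` of `C` belongs to `S_π` iff
there exists `r ∈ R` with `S ⟶* r` and `r ⟶* E`. -/
theorem memSpi_iff {V : Type*} [Fintype V] (A : V → V → Prop) (C E : V) (R : Set V)
    (hacyc : ∀ v : V, ¬ Relation.TransGen A v v)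
    (hCR : C ∉ R) (hER : E ∉ R)
    (S : V) (hS : A C S) :
    memSpi A C E R S ↔
      ∃ r ∈ R, Relation.ReflTransGen A S r ∧ Relation.ReflTransGen A r E :=
  memSpi_iff_general A C E R hacyc hCR S hS
end

section
/- Characterization of S̄_π in the identifiable case: assume the graph is acyclic, let S be a child of C, and assume S_π ∩ S̄_π = ∅. Then S ∈ S̄_π if and only if there is no r ∈ R with Relation.ReflTransGen A S r and Relation.ReflTransGen A r E (that is, no walk from S to E passes through R). -/
/-- `S ∈ S̄_π`: `S` is a child of `C` such that either there is no walk from `S`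
to `E`, or the arc `(C,S)` occurs in some walk from `C` to `E` avoiding `R`. -/
def memSpiBar {V : Type*} (A : V → V → Prop) (C E : V) (R : Set V) (S : V) : Prop :=
  A C S ∧
    ((¬ ∃ l : List V, List.Chain A S l ∧
        (S :: l).getLast (List.cons_ne_nil S l) = E) ∨
      ∃ l : List V, List.Chain A C l ∧
        (C :: l).getLast (List.cons_ne_nil C l) = E ∧
        [C, S] <:+: (C :: l) ∧ ∀ x ∈ C :: l, x ∉ R)

/-!
A vertex of `R` on a walk `S ⟶* E` turns `C → S` followed by that walk into a witness of
`S ∈ S_π`, so under `S_π ∩ S̄_π = ∅` the child `S` can only lie in `S̄_π` when no such vertex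
exists. Conversely, if no walk from `S` to `E` meets `R`, then either there is no walk
`S ⟶* E` at all, or `C → S` followed by any such walk avoids `R` (as `C ∉ R`).
-/

open Relation

namespace List

variable {α : Type*} {r : α → α → Prop} {a b m : α}

theorem reflTransGen_iff_exists_isChain_cons :
    ReflTransGen r a b ↔ ∃ l, IsChain r (a :: l) ∧ (a :: l).getLast (cons_ne_nil a l) = b :=
  ⟨exists_isChain_cons_of_relationReflTransGen,
    fun ⟨l, hl, hb⟩ => relationReflTransGen_of_exists_isChain_cons l hl hb⟩

theorem IsChain.reflTransGen_of_mem_cons {l : List α} (hl : IsChain r (a :: l))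
    (hb : (a :: l).getLast (cons_ne_nil a l) = b) {x : α} (hx : x ∈ a :: l) :
    ReflTransGen r a x ∧ ReflTransGen r x b :=
  ⟨hl.induction (ReflTransGen r a ·) _ (fun _ _ hxy hax => hax.tail hxy)
      (fun _ => .refl) x hx,
    hl.backwards_cons_induction (ReflTransGen r · b) l hb (fun _ _ hxy hyb => hyb.head hxy)
      .refl x hx⟩

theorem exists_isChain_cons_mem_of_reflTransGen (ham : ReflTransGen r a m)
    (hmb : ReflTransGen r m b) :
    ∃ l, IsChain r (a :: l) ∧ (a :: l).getLast (cons_ne_nil a l) = b ∧ m ∈ a :: l := by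
  induction ham using ReflTransGen.head_induction_on with
  | refl =>
    obtain ⟨l, hl, hb⟩ := reflTransGen_iff_exists_isChain_cons.1 hmb
    exact ⟨l, hl, hb, mem_cons_self⟩
  | head hac _ ih =>
    obtain ⟨l, hl, hb, hm⟩ := ih
    exact ⟨_ :: l, hl.cons_cons hac, by rwa [getLast_cons_cons], mem_cons_of_mem _ hm⟩

end List

section Redlining

variable {V : Type*} {A : V → V → Prop} {C E S r : V} {R : Set V}

theorem memSpi_of_reflTransGen (hS : A C S) (hr : r ∈ R) (hSr : ReflTransGen A S r)
    (hrE : ReflTransGen A r E) : memSpi A C E R S := by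
  obtain ⟨l, hl, hE, hrl⟩ := List.exists_isChain_cons_mem_of_reflTransGen hSr hrE
  exact ⟨hS, S :: l, hl.cons_cons hS, by rwa [List.getLast_cons_cons], ⟨[], l, rfl⟩,
    r, List.mem_cons_of_mem _ hrl, hr⟩

theorem memSpiBar_of_not_exists_mem (hS : A C S) (hCR : C ∉ R)
    (hR : ¬ ∃ r ∈ R, ReflTransGen A S r ∧ ReflTransGen A r E) : memSpiBar A C E R S := by
  refine ⟨hS, or_iff_not_imp_left.2 fun hwalk => ?_⟩
  obtain ⟨l, hl, hE⟩ := not_not.1 hwalk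
  refine ⟨S :: l, List.IsChain.cons_cons hS hl, by rwa [List.getLast_cons_cons],
    ⟨[], l, rfl⟩, ?_⟩
  rintro x (_ | ⟨_, hx⟩) hxR
  · exact hCR hxR
  · exact hR ⟨x, hxR, List.IsChain.reflTransGen_of_mem_cons hl hE hx⟩

end Redlining

theorem memSpiBar_iff_general {V : Type*} (A : V → V → Prop) (C E : V) (R : Set V)
    (hCR : C ∉ R)
    (hdisj : {T : V | memSpi A C E R T} ∩ {T : V | memSpiBar A C E R T} = ∅)
    (S : V) (hS : A C S) :
    memSpiBar A C E R S ↔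
      ¬ ∃ r ∈ R, Relation.ReflTransGen A S r ∧ Relation.ReflTransGen A r E := by
  refine ⟨?_, memSpiBar_of_not_exists_mem hS hCR⟩
  rintro hbar ⟨r, hr, hSr, hrE⟩
  rcases hbar.2 with hno_walk | -
  · exact hno_walk (List.reflTransGen_iff_exists_isChain_cons.1 (hSr.trans hrE))
  · exact Set.eq_empty_iff_forall_notMem.1 hdisj S ⟨memSpi_of_reflTransGen hS hr hSr hrE, hbar⟩

/-- Characterization of `S̄_π` in the identifiable case: in an acyclic graph, if
`S_π ∩ S̄_π = ∅`, then a child `S` of `C` belongs to `S̄_π` iff there is no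
`r ∈ R` with `S ⟶* r` and `r ⟶* E`. -/
theorem memSpiBar_iff {V : Type*} [Fintype V] (A : V → V → Prop) (C E : V) (R : Set V)
    (hacyc : ∀ v : V, ¬ Relation.TransGen A v v)
    (hCR : C ∉ R) (hER : E ∉ R)
    (hdisj : {T : V | memSpi A C E R T} ∩ {T : V | memSpiBar A C E R T} = ∅)
    (S : V) (hS : A C S) :
    memSpiBar A C E R S ↔
      ¬ ∃ r ∈ R, Relation.ReflTransGen A S r ∧ Relation.ReflTransGen A r E :=
  memSpiBar_iff_general A C E R hCR hdisj S hS
end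

section
/- The recanting witness criterion is never satisfied for the direct path set: if π_d is the path set consisting solely of the single-arc walk from C to E (vertex list [C, E]), then no vertex Z is a recanting witness for π_d; hence the π_d-specific effect (direct discrimination) is always identifiable in this sense. -/
/-- `Z` is a recanting witness for the path set `π`. Here `π` is a set of walks
from `C` to `E`, each walk represented by its list of vertices following `C`
(so the walk with list `l` has vertex list `C :: l`); a walk is a segment of
another walk if its vertex list is a contiguous infix of the other's vertex list.
`Z` (with `Z ≠ C` and `Z ≠ E`) is a recanting witness if (1) some nonempty walk
from `C` to `Z` is a segment of a walk in `π`, (2) some nonempty walk from `Z` to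
`E` is a segment of a walk in `π`, and (3) some nonempty walk from `Z` to `E` is
not a segment of any walk in `π`. -/
def RecantingWitness {V : Type*} (A : V → V → Prop) (C E : V) (π : Set (List V))
    (Z : V) : Prop :=
  Z ≠ C ∧ Z ≠ E ∧
  (∃ m : List V, m ≠ [] ∧ List.Chain A C m ∧
      (C :: m).getLast (List.cons_ne_nil C m) = Z ∧
      ∃ l ∈ π, (C :: m) <:+: (C :: l)) ∧
  (∃ m : List V, m ≠ [] ∧ List.Chain A Z m ∧
      (Z :: m).getLast (List.cons_ne_nil Z m) = E ∧
      ∃ l ∈ π, (Z :: m) <:+: (C :: l)) ∧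
  (∃ m : List V, m ≠ [] ∧ List.Chain A Z m ∧
      (Z :: m).getLast (List.cons_ne_nil Z m) = E ∧
      ∀ l ∈ π, ¬ (Z :: m) <:+: (C :: l))

/-- The recanting witness criterion is never satisfied for the direct path set
`π_d`, which consists solely of the single-arc walk from `C` to `E` (vertex list
`[C, E]`): no vertex `Z` is a recanting witness for `π_d`. Hence the
`π_d`-specific effect (direct discrimination) is always identifiable. -/
theorem no_recanting_witness_for_direct_path {V : Type*} [Fintype V]
    (A : V → V → Prop) (C E : V) (hCE : A C E) (Z : V) :
    ¬ RecantingWitness A C E {[E]} Z := by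
  rintro ⟨hZC, hZE, -, ⟨m, hm, -, -, l, hl, hinf⟩, -⟩
  rw [Set.mem_singleton_iff] at hl
  subst hl
  have hlen := hinf.length_le
  have : (Z :: m).length = 2 := by
    have h1 : 1 ≤ m.length := List.length_pos_iff.mpr hm
    simp only [List.length_cons, List.length_singleton, List.length_nil] at hlen ⊢
    omega
  have heq := hinf.eq_of_length (by simpa using this)
  exact hZC (by simpa using congrArg (·.head?) heq)
end

section
/- Correctness of the arc-removal procedure for the unidentifiable situation: assume the graph with adjacency relation A is acyclic. Let A' be the adjacency relation obtained from A by deleting every arc (Q, E) for which there exist S ∈ S_π ∩ S̄_π (computed in A) and r ∈ R with Relation.ReflTransGen A S r and Relation.ReflTransGen A r Q. Then in the modified graph A' one has S_π(A') ∩ S̄_π(A') = ∅, where S_π(A') and S̄_π(A') are defined exactly as S_π and S̄_π but with respect to the relation A'. -/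
namespace List

variable {α : Type*} {B : α → α → Prop} {l : List α} {u v w x : α}

theorem exists_eq_cons_of_infix_of_notMem (hu : u ∉ l) (h : [u, v] <:+: u :: l) :
    ∃ t, l = v :: t := by
  rcases infix_cons_iff.1 h with h | h
  · obtain ⟨-, t, rfl⟩ := cons_prefix_cons.1 h
    exact ⟨t, rfl⟩
  · exact absurd (h.subset mem_cons_self) hu

theorem IsChain.reflTransGen_head_of_mem (h : IsChain B (u :: l)) (hx : x ∈ u :: l) :
    Relation.ReflTransGen B u x := by
  rcases mem_cons.1 hx with rfl | hx
  · exact .refl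
  · exact h.cons_induction _ l (fun _ _ hyz hy => hy.tail hyz) .refl x hx

theorem IsChain.transGen_head_of_mem_tail (h : IsChain B (u :: l)) (hx : x ∈ l) :
    Relation.TransGen B u x := by
  obtain _ | ⟨a, l⟩ := l
  · exact absurd hx not_mem_nil
  · obtain ⟨hua, ha⟩ := isChain_cons_cons.1 h
    exact .head' hua (ha.reflTransGen_head_of_mem hx)

theorem IsChain.reflTransGen_of_mem (h : IsChain B (u :: l))
    (hw : (u :: l).getLast (cons_ne_nil u l) = w) (hx : x ∈ u :: l) :
    Relation.ReflTransGen B x w :=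
  h.backwards_cons_induction (Relation.ReflTransGen B · w) l hw (fun _ _ hyz hz => hz.head hyz)
    .refl x hx

theorem IsChain.exists_reflTransGen_rel_of_mem (h : IsChain B (u :: l))
    (hw : (u :: l).getLast (cons_ne_nil u l) = w) (hx : x ∈ u :: l) (hxw : x ≠ w) :
    ∃ q, Relation.ReflTransGen B x q ∧ B q w :=
  ((h.reflTransGen_of_mem hw hx).cases_tail).resolve_left hxw.symm

end List

section Spi

variable {V : Type*} {A A' : V → V → Prop} {C E S : V} {R : Set V}

theorem memSpi.mono (hle : ∀ u v, A' u v → A u v) (h : memSpi A' C E R S) :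
    memSpi A C E R S :=
  let ⟨hCS, l, hl, hlast, hinf, hR⟩ := h
  ⟨hle _ _ hCS, l, List.IsChain.imp hle hl, hlast, hinf, hR⟩

theorem memSpiBar.mono_of_reaches (hle : ∀ u v, A' u v → A u v) (h : memSpiBar A' C E R S)
    (hreach : ∃ l, List.IsChain A' (S :: l) ∧ (S :: l).getLast (List.cons_ne_nil S l) = E) :
    memSpiBar A C E R S := by
  obtain ⟨l, hl, hlast, hinf, havoid⟩ := h.2.resolve_left (not_not_intro hreach)
  exact ⟨hle _ _ h.1, .inr ⟨l, List.IsChain.imp hle hl, hlast, hinf, havoid⟩⟩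

theorem memSpi.exists_walk_from_child (hacyc : ∀ v, ¬ Relation.TransGen A v v) (hCR : C ∉ R)
    (h : memSpi A C E R S) :
    ∃ t, List.IsChain A (S :: t) ∧ (S :: t).getLast (List.cons_ne_nil S t) = E ∧
      ∃ x ∈ S :: t, x ∈ R := by
  obtain ⟨-, l, hl, hlast, hinf, x, hx, hxR⟩ := h
  have hC : C ∉ l := fun hC => hacyc C (List.IsChain.transGen_head_of_mem_tail hl hC)
  obtain ⟨t, rfl⟩ := List.exists_eq_cons_of_infix_of_notMem hC hinf
  refine ⟨t, hl.tail, ?_, x, (List.mem_cons.1 hx).resolve_left ?_, hxR⟩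
  · rwa [List.getLast_cons (List.cons_ne_nil S t)] at hlast
  · rintro rfl
    exact hCR hxR

end Spi

theorem arc_removal_makes_disjoint_general {V : Type*}
    (A : V → V → Prop) (C E : V) (R : Set V)
    (hacyc : ∀ v : V, ¬ Relation.TransGen A v v)
    (hCR : C ∉ R) (hER : E ∉ R)
    (A' : V → V → Prop)
    (hA' : ∀ u v : V, A' u v ↔ A u v ∧
        ¬ (v = E ∧ ∃ S : V, memSpi A C E R S ∧ memSpiBar A C E R S ∧
            ∃ r ∈ R, Relation.ReflTransGen A S r ∧ Relation.ReflTransGen A r u)) :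
    {S : V | memSpi A' C E R S} ∩ {S : V | memSpiBar A' C E R S} = ∅ := by
  have hle : ∀ u v, A' u v → A u v := fun u v h => ((hA' u v).1 h).1
  have hacyc' : ∀ v, ¬ Relation.TransGen A' v v := fun v h =>
    hacyc v (Relation.TransGen.mono hle _ _ h)
  refine Set.eq_empty_of_forall_notMem fun S ⟨hSpi, hBar⟩ => ?_
  obtain ⟨t, ht, hlast, x, hx, hxR⟩ := hSpi.exists_walk_from_child hacyc' hCR
  obtain ⟨Q, hxQ, hQE⟩ :=
    ht.exists_reflTransGen_rel_of_mem hlast hx (ne_of_mem_of_not_mem hxR hER)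
  exact ((hA' Q E).1 hQE).2 ⟨rfl, S, hSpi.mono hle, hBar.mono_of_reaches hle ⟨t, ht, hlast⟩,
    x, hxR, Relation.ReflTransGen.mono hle _ _ (ht.reflTransGen_head_of_mem hx),
    Relation.ReflTransGen.mono hle _ _ hxQ⟩

/-- Correctness of the arc-removal procedure for the unidentifiable situation:
if the graph `A` is acyclic and `A'` is obtained from `A` by deleting every arc
`(Q, E)` for which there exist `S ∈ S_π ∩ S̄_π` (computed in `A`) and `r ∈ R`
with `S ⟶* r` and `r ⟶* Q` (reflexive-transitive closure of `A`), then in the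
modified graph `A'` one has `S_π(A') ∩ S̄_π(A') = ∅`. -/
theorem arc_removal_makes_disjoint {V : Type*} [Fintype V]
    (A : V → V → Prop) (C E : V) (R : Set V)
    (hacyc : ∀ v : V, ¬ Relation.TransGen A v v)
    (hCR : C ∉ R) (hER : E ∉ R)
    (A' : V → V → Prop)
    (hA' : ∀ u v : V, A' u v ↔ A u v ∧
        ¬ (v = E ∧ ∃ S : V, memSpi A C E R S ∧ memSpiBar A C E R S ∧
            ∃ r ∈ R, Relation.ReflTransGen A S r ∧ Relation.ReflTransGen A r u)) :
    {S : V | memSpi A' C E R S} ∩ {S : V | memSpiBar A' C E R S} = ∅ :=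
  arc_removal_makes_disjoint_general A C E R hacyc hCR hER A' hA'
end

section
/- The post-intervention distribution given by the truncated factorization formula is a probability distribution: for every node X and every value x : D X, the sum over all full assignments a with a X = x of ∏_{i ≠ X} cpt i (a restricted to pa i) (a i) equals 1. -/
/-!
Replacing the factor of `X` by the indicator of `a X = x` turns the truncated product into
the joint density of another Bayesian network, so it suffices to show that such a density sums
to one. More generally, if every factor `f i` depends only on the coordinates `j ≤ i` and sums
to one in its own coordinate, then summing `∏ i ∈ T, f i` over all assignments gives the number
of assignments of the coordinates outside `T`: peel off the largest node `m` of `T`, average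
over the value at `m`, and use that the remaining factors do not see it.
-/

open Finset Function

theorem Fintype.sum_sum_update {ι : Type*} [DecidableEq ι] [Fintype ι] {D : ι → Type*}
    [∀ i, Fintype (D i)] {M : Type*} [AddCommMonoid M] (F : (∀ i, D i) → M) (m : ι) :
    ∑ a, ∑ y : D m, F (update a m y) = Fintype.card (D m) • ∑ a, F a := by
  have hinv : Involutive fun p : (∀ i, D i) × D m => (update p.1 m p.2, p.1 m) := by
    rintro ⟨a, y⟩
    simp
  calc ∑ a, ∑ y : D m, F (update a m y)
      = ∑ p : (∀ i, D i) × D m, F (hinv.toPerm _ p).1 := (Fintype.sum_prod_type' _).symm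
    _ = ∑ p : (∀ i, D i) × D m, F p.1 := Equiv.sum_comp (hinv.toPerm _) fun p => F p.1
    _ = Fintype.card (D m) • ∑ a, F a := by
      simp [Fintype.sum_prod_type, smul_sum]

section LocalFactors

variable {ι : Type*} [Fintype ι] [LinearOrder ι] {D : ι → Type*} [∀ i, Fintype (D i)]
  {K : Type*} [Semifield K] [CharZero K]

theorem sum_prod_eq_prod_card [∀ i, Nonempty (D i)] (f : ι → (∀ i, D i) → K)
    (hf_local : ∀ i a b, (∀ j ≤ i, a j = b j) → f i a = f i b)
    (hf_sum : ∀ i a, ∑ y, f i (update a i y) = 1) (T : Finset ι) :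
    ∑ a, ∏ i ∈ T, f i a = ∏ i ∈ Tᶜ, (Fintype.card (D i) : K) := by
  induction T using Finset.induction_on_max with
  | empty => simp [Fintype.card_pi]
  | insert m s hlt ih =>
    have hm : m ∉ s := fun hm => lt_irrefl m (hlt m hm)
    have hs_update : ∀ a (y : D m), ∏ i ∈ s, f i (update a m y) = ∏ i ∈ s, f i a := by
      refine fun a y => prod_congr rfl fun i hi => hf_local i _ _ fun j hj => ?_
      exact update_of_ne (hj.trans_lt (hlt i hi)).ne _ _
    have hcard : (Fintype.card (D m) : K) ≠ 0 := Nat.cast_ne_zero.2 Fintype.card_ne_zero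
    refine mul_left_cancel₀ hcard ?_
    calc (Fintype.card (D m) : K) * ∑ a, ∏ i ∈ insert m s, f i a
        = ∑ a, ∑ y, ∏ i ∈ insert m s, f i (update a m y) := by
          rw [Fintype.sum_sum_update fun a => ∏ i ∈ insert m s, f i a, nsmul_eq_mul]
      _ = ∑ a, ∏ i ∈ s, f i a := by
          refine sum_congr rfl fun a _ => ?_
          simp_rw [prod_insert hm, hs_update, ← sum_mul, hf_sum, one_mul]
      _ = (Fintype.card (D m) : K) * ∏ i ∈ (insert m s)ᶜ, (Fintype.card (D i) : K) := by
          rw [ih, compl_insert,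
            mul_prod_erase _ (fun i => (Fintype.card (D i) : K)) (mem_compl.2 hm)]

end LocalFactors

section BayesianNetwork

variable {n : ℕ} {D : Fin n → Type} [∀ i, DecidableEq (D i)] {pa : Fin n → Finset (Fin n)}
  (cpt : ∀ i : Fin n, ((j : {x // x ∈ pa i}) → D j.1) → D i → ℝ) (X : Fin n) (x : D X)

def interventionFactor : Fin n → (∀ i, D i) → ℝ :=
  update (fun i a => cpt i (fun j => a j.1) (a i)) X fun a => if a X = x then 1 else 0

theorem interventionFactor_of_ne {i : Fin n} (hi : i ≠ X) (a : ∀ i, D i) :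
    interventionFactor cpt X x i a = cpt i (fun j => a j.1) (a i) := by
  simp [interventionFactor, hi]

theorem interventionFactor_congr_of_eqOn_Iic (hpa : ∀ i : Fin n, ∀ j ∈ pa i, j < i) (i : Fin n)
    (a b : ∀ i, D i) (hab : ∀ j ≤ i, a j = b j) :
    interventionFactor cpt X x i a = interventionFactor cpt X x i b := by
  rcases eq_or_ne i X with rfl | hi
  · simp [interventionFactor, hab i le_rfl]
  have hpar : (fun j : {x // x ∈ pa i} => a j.1) = fun j : {x // x ∈ pa i} => b j.1 :=
    funext fun j => hab j (hpa i j j.2).le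
  rw [interventionFactor_of_ne cpt X x hi, interventionFactor_of_ne cpt X x hi, hpar,
    hab i le_rfl]

theorem sum_interventionFactor_update [∀ i, Fintype (D i)]
    (hpa : ∀ i : Fin n, ∀ j ∈ pa i, j < i) (hsum : ∀ i p, ∑ x : D i, cpt i p x = 1)
    (i : Fin n) (a : ∀ i, D i) :
    ∑ y, interventionFactor cpt X x i (update a i y) = 1 := by
  rcases eq_or_ne i X with rfl | hi
  · simp [interventionFactor]
  have hpar (y : D i) :
      (fun j : {x // x ∈ pa i} => update a i y j.1) = fun j : {x // x ∈ pa i} => a j.1 :=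
    funext fun j => update_of_ne (hpa i j j.2).ne _ _
  simp only [interventionFactor_of_ne cpt X x hi, hpar, update_self, hsum]

end BayesianNetwork

theorem bn_truncated_sums_to_one_general {n : ℕ} (D : Fin n → Type)
    [∀ i, Fintype (D i)] [∀ i, Nonempty (D i)] [∀ i, DecidableEq (D i)]
    (pa : Fin n → Finset (Fin n))
    (hpa : ∀ i : Fin n, ∀ j ∈ pa i, j < i)
    (cpt : ∀ i : Fin n, ((j : {x // x ∈ pa i}) → D j.1) → D i → ℝ)
    (hsum : ∀ i p, ∑ x : D i, cpt i p x = 1)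
    (X : Fin n) (x : D X) :
    ∑ a ∈ Finset.univ.filter (fun a : ∀ i, D i => a X = x),
      ∏ i ∈ Finset.univ.erase X, cpt i (fun j => a j.1) (a i) = 1 := by
  have htotal := sum_prod_eq_prod_card (interventionFactor cpt X x)
    (interventionFactor_congr_of_eqOn_Iic cpt X x hpa)
    (sum_interventionFactor_update cpt X x hpa hsum) univ
  rw [compl_univ, prod_empty] at htotal
  rw [← htotal, sum_filter]
  refine sum_congr rfl fun a _ => ?_
  rw [← mul_prod_erase univ _ (mem_univ X),
    prod_congr rfl fun i hi => interventionFactor_of_ne cpt X x (ne_of_mem_erase hi) a]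
  split_ifs with ha <;> simp [interventionFactor, ha]

/-- The post-intervention distribution given by the truncated factorization
formula is a probability distribution: for every node `X` and every value
`x : D X`, the sum over all full assignments `a` with `a X = x` of
`∏_{i ≠ X} cpt i (a restricted to pa i) (a i)` equals `1`. -/
theorem bn_truncated_sums_to_one {n : ℕ} (D : Fin n → Type)
    [∀ i, Fintype (D i)] [∀ i, Nonempty (D i)] [∀ i, DecidableEq (D i)]
    (pa : Fin n → Finset (Fin n))
    (hpa : ∀ i : Fin n, ∀ j ∈ pa i, j < i)
    (cpt : ∀ i : Fin n, ((j : {x // x ∈ pa i}) → D j.1) → D i → ℝ)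
    (hnn : ∀ i p x, 0 ≤ cpt i p x)
    (hsum : ∀ i p, ∑ x : D i, cpt i p x = 1)
    (X : Fin n) (x : D X) :
    ∑ a ∈ Finset.univ.filter (fun a : ∀ i, D i => a X = x),
      ∏ i ∈ Finset.univ.erase X, cpt i (fun j => a j.1) (a i) = 1 :=
  bn_truncated_sums_to_one_general D pa hpa cpt hsum X x
end

section
/- Marginal of a parentless node: if C is a node with pa C = ∅, then for every value c : D C, the marginal probability ∑_{a : a C = c} P(a) equals cpt C c (the unconditional table value of C at c). -/
theorem bn_aux : ∀ (n : ℕ) (D : Fin n → Type) [∀ i, Fintype (D i)] [∀ i, Nonempty (D i)]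
    (h : ∀ i : Fin n, (∀ j, D j) → D i → ℝ)
    (_ : ∀ i : Fin n, ∀ a b : (∀ j, D j), (∀ j, j < i → a j = b j) → ∀ x, h i a x = h i b x)
    (s : Fin n → ℝ)
    (_ : ∀ i a, ∑ x : D i, h i a x = s i),
    ∑ a : ∀ j, D j, ∏ i, h i a (a i) = ∏ i, s i := by
  intro n
  induction n with
  | zero =>
    intro D _ _ h hdep s hs
    simp
  | succ n ih =>
    intro D _ _ h hdep s hs
    obtain ⟨x₀⟩ : Nonempty (D (Fin.last n)) := inferInstance
    set D' : Fin n → Type := fun i => D i.castSucc with hD'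
    set h' : ∀ i : Fin n, (∀ j, D' j) → D' i → ℝ :=
      fun i b y => h i.castSucc (Fin.snoc b x₀) y with hh'
    have agree : ∀ (b : ∀ j, D' j) (x : D (Fin.last n)) (i : Fin (n+1)),
        ∀ j, j < i → Fin.snoc b x j = Fin.snoc b x₀ j := by
      intro b x i j hj
      have hjn : (j : ℕ) < n := by
        have h1 : (j : ℕ) < (i : ℕ) := hj
        have h2 : (i : ℕ) ≤ n := Nat.lt_succ_iff.mp i.isLt
        omega
      have : j = Fin.castSucc ⟨j, hjn⟩ := by ext; simp
      rw [this, Fin.snoc_castSucc, Fin.snoc_castSucc]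
    have hdep' : ∀ i : Fin n, ∀ a b : (∀ j, D' j),
        (∀ j, j < i → a j = b j) → ∀ y, h' i a y = h' i b y := by
      intro i a b hab y
      apply hdep
      intro j hj
      have hjn : (j : ℕ) < n := lt_of_lt_of_le hj (Nat.lt_succ_iff.mp i.castSucc.isLt)
      have hje : j = Fin.castSucc ⟨j, hjn⟩ := by ext; simp
      rw [hje, Fin.snoc_castSucc, Fin.snoc_castSucc]
      exact hab _ hj
    have key := ih D' h' hdep' (fun i => s i.castSucc) (fun i a => hs i.castSucc _)
    rw [← Equiv.sum_comp (Fin.snocEquiv D)]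
    rw [Fintype.sum_prod_type]
    have step : ∀ (x : D (Fin.last n)) (b : ∀ j, D' j),
        ∏ i : Fin (n+1), h i (Fin.snocEquiv D (x, b)) ((Fin.snocEquiv D (x, b)) i)
          = (∏ i : Fin n, h' i b (b i)) * h (Fin.last n) (Fin.snoc b x₀) x := by
      intro x b
      have he : ∀ i, (Fin.snocEquiv D (x, b)) i = Fin.snoc b x i := fun i => rfl
      rw [Fin.prod_univ_castSucc]
      congr 1
      · apply Finset.prod_congr rfl
        intro i _
        rw [he, Fin.snoc_castSucc]
        exact hdep _ _ _ (agree b x _) _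
      · rw [he, Fin.snoc_last]
        exact hdep _ _ _ (agree b x _) _
    calc ∑ x : D (Fin.last n), ∑ b : ∀ j, D' j,
            ∏ i : Fin (n+1), h i (Fin.snocEquiv D (x, b)) ((Fin.snocEquiv D (x, b)) i)
        = ∑ x : D (Fin.last n), ∑ b : ∀ j, D' j,
            (∏ i : Fin n, h' i b (b i)) * h (Fin.last n) (Fin.snoc b x₀) x := by
          apply Finset.sum_congr rfl; intro x _
          exact Finset.sum_congr rfl fun b _ => step x b
      _ = ∑ b : ∀ j, D' j, (∏ i : Fin n, h' i b (b i)) * s (Fin.last n) := by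
          rw [Finset.sum_comm]
          apply Finset.sum_congr rfl; intro b _
          rw [← Finset.mul_sum, hs]
      _ = (∏ i : Fin n, s i.castSucc) * s (Fin.last n) := by
          rw [← Finset.sum_mul, key]
      _ = ∏ i : Fin (n+1), s i := (Fin.prod_univ_castSucc s).symm

/-- Marginal of a parentless node: if `C` is a node with `pa C = ∅`, then for
every value `c : D C`, the marginal probability `∑_{a : a C = c} P(a)` equals
`cpt C c` (the unconditional table value of `C` at `c`; `p` is the trivial
parent assignment, unique since `pa C = ∅`). -/
theorem bn_marginal_parentless {n : ℕ} (D : Fin n → Type)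
    [∀ i, Fintype (D i)] [∀ i, Nonempty (D i)] [∀ i, DecidableEq (D i)]
    (pa : Fin n → Finset (Fin n))
    (hpa : ∀ i : Fin n, ∀ j ∈ pa i, j < i)
    (cpt : ∀ i : Fin n, ((j : {x // x ∈ pa i}) → D j.1) → D i → ℝ)
    (hnn : ∀ i p x, 0 ≤ cpt i p x)
    (hsum : ∀ i p, ∑ x : D i, cpt i p x = 1)
    (C : Fin n) (hC : pa C = ∅) (c : D C)
    (p : (j : {x // x ∈ pa C}) → D j.1) :
    ∑ a ∈ Finset.univ.filter (fun a : ∀ i, D i => a C = c),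
      ∏ i : Fin n, cpt i (fun j => a j.1) (a i) = cpt C p c := by
  classical
  set h : ∀ i : Fin n, (∀ j, D j) → D i → ℝ :=
    fun i a x => cpt i (fun j => a j.1) x * (if hi : C = i then (if x = cast (congrArg D hi) c then 1 else 0) else 1)
    with hh
  have hpC : ∀ q : (j : {x // x ∈ pa C}) → D j.1, q = p := by
    intro q; funext j; exact absurd j.2 (by simp [hC])
  have hdep : ∀ i : Fin n, ∀ a b : (∀ j, D j), (∀ j, j < i → a j = b j) → ∀ x, h i a x = h i b x := by
    intro i a b hab x
    simp only [hh]
    congr 2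
    funext j
    exact hab _ (hpa i _ j.2)
  have hs : ∀ (i : Fin n) (a : ∀ j, D j),
      ∑ x : D i, h i a x = if C = i then cpt C p c else 1 := by
    intro i a
    by_cases hi : C = i
    · subst hi
      simp only [hh, dif_pos rfl, if_pos rfl, cast_eq]
      rw [hpC (fun j => a j.1)]
      simp [mul_ite]
    · rw [if_neg hi]
      simp only [hh, dif_neg hi, mul_one]
      exact hsum i _
  have key := bn_aux n D h hdep _ hs
  have lhs_eq : ∑ a ∈ Finset.univ.filter (fun a : ∀ i, D i => a C = c),
      ∏ i : Fin n, cpt i (fun j => a j.1) (a i) = ∑ a : ∀ j, D j, ∏ i, h i a (a i) := by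
    rw [Finset.sum_filter]
    apply Finset.sum_congr rfl
    intro a _
    by_cases hac : a C = c
    · rw [if_pos hac]
      apply Finset.prod_congr rfl
      intro i _
      simp only [hh]
      by_cases hi : C = i
      · subst hi; rw [dif_pos rfl, cast_eq, if_pos hac, mul_one]
      · rw [dif_neg hi, mul_one]
    · rw [if_neg hac]
      symm
      apply Finset.prod_eq_zero (Finset.mem_univ C)
      simp [hh, hac]
  rw [lhs_eq, key]
  exact Finset.prod_ite_eq Finset.univ C (fun _ => cpt C p c) |>.trans (if_pos (Finset.mem_univ C))
end

section
/- The total causal effect equals the risk difference when the protected attribute has no parents: let C be a node with pa C = ∅, let E be a node distinct from C, let c⁺, c⁻ : D C with cpt C c⁺ > 0 and cpt C c⁻ > 0, and let e⁺ : D E. Then TE(c⁺, c⁻) := P({a | a E = e⁺} | do(C = c⁺)) − P({a | a E = e⁺} | do(C = c⁻)) equals P(E = e⁺ | C = c⁺) − P(E = e⁺ | C = c⁻), where P(E = e⁺ | C = c) denotes P({a | a E = e⁺} ∩ {a | a C = c}) / P({a | a C = c}). -/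
/-!
Since `C` has no parents, its table entry is a constant factor `cpt C p c` of the joint
probability of every assignment with `a C = c`, so `P(W ∩ {C = c}) = cpt C p c · P(W | do(C = c))`.
For `W` the sure event the post-intervention probability is `1`, by summing out the remaining
nodes from the first in topological order onwards. Hence `P(C = c) = cpt C p c`, and the
conditional probability `P(W | C = c)` is the post-intervention probability `P(W | do(C = c))`.
-/

open Finset

namespace BayesNet

variable {n : ℕ} {D : Fin n → Type} {pa : Fin n → Finset (Fin n)}
  (cpt : ∀ i : Fin n, ((j : {x // x ∈ pa i}) → D j.1) → D i → ℝ)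

theorem prod_cpt_eq_mul_prod_erase_of_pa_eq_empty {C : Fin n} (hC : pa C = ∅)
    (p : (j : {x // x ∈ pa C}) → D j.1) (a : ∀ i, D i) :
    ∏ i, cpt i (fun j => a j.1) (a i)
      = cpt C p (a C) * ∏ i ∈ univ.erase C, cpt i (fun j => a j.1) (a i) := by
  have hp : (fun j : {x // x ∈ pa C} => a j.1) = p :=
    funext fun j => absurd (hC ▸ j.2) (notMem_empty j.1)
  rw [← mul_prod_erase univ _ (mem_univ C), hp]

variable [∀ i, Fintype (D i)]

theorem sum_filter_prod_cpt_eq_mul_sum_prod_erase {C : Fin n} (hC : pa C = ∅)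
    (p : (j : {x // x ∈ pa C}) → D j.1) (c : D C) (Q : (∀ i, D i) → Prop) [DecidablePred Q]
    (hQ : ∀ a, Q a → a C = c) :
    ∑ a ∈ univ.filter Q, ∏ i, cpt i (fun j => a j.1) (a i)
      = cpt C p c * ∑ a ∈ univ.filter Q, ∏ i ∈ univ.erase C, cpt i (fun j => a j.1) (a i) := by
  rw [mul_sum]
  refine sum_congr rfl fun a ha => ?_
  rw [prod_cpt_eq_mul_prod_erase_of_pa_eq_empty cpt hC p, hQ a (mem_filter.1 ha).2]

variable [∀ i, DecidableEq (D i)]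

theorem filter_agree_outside_insert_filter_eq {m : Fin n} {s : Finset (Fin n)} (hm : m ∉ s)
    (b : ∀ i, D i) (x : D m) :
    (univ.filter fun a : ∀ i, D i => ∀ j ∉ insert m s, a j = b j).filter (fun a => a m = x)
      = univ.filter fun a : ∀ i, D i => ∀ j ∉ s, a j = Function.update b m x j := by
  ext a
  simp only [mem_filter, mem_univ, true_and, mem_insert, not_or]
  constructor
  · rintro ⟨hb, rfl⟩ j hj
    by_cases hjm : j = m
    · subst hjm
      simp
    · rw [Function.update_of_ne hjm, hb j ⟨hjm, hj⟩]
  · intro h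
    refine ⟨fun j ⟨hjm, hjs⟩ => ?_, ?_⟩
    · rw [h j hjs, Function.update_of_ne hjm]
    · simpa using h m hm

theorem sum_prod_cpt_agree_outside_eq_one (hpa : ∀ i : Fin n, ∀ j ∈ pa i, j < i)
    (hsum : ∀ i p, ∑ x : D i, cpt i p x = 1) (s : Finset (Fin n)) (b : ∀ i, D i) :
    ∑ a ∈ univ.filter (fun a : ∀ i, D i => ∀ j ∉ s, a j = b j),
      ∏ i ∈ s, cpt i (fun j => a j.1) (a i) = 1 := by
  induction s using Finset.induction_on_min generalizing b with
  | empty =>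
    have : univ.filter (fun a : ∀ i, D i => ∀ j ∉ (∅ : Finset (Fin n)), a j = b j) = {b} := by
      ext a
      simp [funext_iff]
    rw [this, sum_singleton, prod_empty]
  | insert m s hmin ih =>
    have hm : m ∉ s := fun hms => lt_irrefl m (hmin m hms)
    -- the parents of the minimal node `m` lie outside `insert m s`, so its factor only sees `b`
    have hfactor : ∀ x : D m, ∀ a ∈ univ.filter (fun a : ∀ i, D i => ∀ j ∉ s,
          a j = Function.update b m x j),
        ∏ i ∈ insert m s, cpt i (fun j => a j.1) (a i)
          = cpt m (fun j => b j.1) x * ∏ i ∈ s, cpt i (fun j => a j.1) (a i) := by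
      intro x a ha
      simp only [mem_filter, mem_univ, true_and] at ha
      have hpar : (fun j : {y // y ∈ pa m} => a j.1) = fun j : {y // y ∈ pa m} => b j.1 := by
        funext j
        have hjm : j.1 < m := hpa m j.1 j.2
        rw [ha j.1 fun (hjs : j.1 ∈ s) => (hmin j.1 hjs).not_gt hjm, Function.update_of_ne hjm.ne]
      rw [prod_insert hm, hpar, ha m hm, Function.update_self]
    calc ∑ a ∈ univ.filter (fun a : ∀ i, D i => ∀ j ∉ insert m s, a j = b j),
          ∏ i ∈ insert m s, cpt i (fun j => a j.1) (a i)
        = ∑ x : D m, ∑ a ∈ univ.filter (fun a : ∀ i, D i => ∀ j ∉ s,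
            a j = Function.update b m x j), ∏ i ∈ insert m s, cpt i (fun j => a j.1) (a i) := by
          rw [← sum_fiberwise _ (fun a : ∀ i, D i => a m)]
          simp only [filter_agree_outside_insert_filter_eq hm]
      _ = ∑ x : D m, cpt m (fun j => b j.1) x := by
          refine sum_congr rfl fun x _ => ?_
          rw [sum_congr rfl (hfactor x), ← mul_sum, ih, mul_one]
      _ = 1 := hsum m _

theorem sum_filter_apply_eq_prod_erase_eq_one [∀ i, Nonempty (D i)]
    (hpa : ∀ i : Fin n, ∀ j ∈ pa i, j < i) (hsum : ∀ i p, ∑ x : D i, cpt i p x = 1)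
    (C : Fin n) (c : D C) :
    ∑ a ∈ univ.filter (fun a : ∀ i, D i => a C = c),
      ∏ i ∈ univ.erase C, cpt i (fun j => a j.1) (a i) = 1 := by
  set b : ∀ i, D i := Function.update (fun i => Classical.arbitrary (D i)) C c
  have hfilter : univ.filter (fun a : ∀ i, D i => a C = c)
      = univ.filter fun a : ∀ i, D i => ∀ j ∉ univ.erase C, a j = b j := by
    ext a
    simp [b]
  rw [hfilter, sum_prod_cpt_agree_outside_eq_one cpt hpa hsum]

theorem div_sum_filter_apply_eq_sum_prod_erase_of_pa_eq_empty [∀ i, Nonempty (D i)]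
    (hpa : ∀ i : Fin n, ∀ j ∈ pa i, j < i) (hsum : ∀ i p, ∑ x : D i, cpt i p x = 1)
    {C : Fin n} (hC : pa C = ∅) (p : (j : {x // x ∈ pa C}) → D j.1) {c : D C}
    (hc : cpt C p c ≠ 0) (W : (∀ i, D i) → Prop) [DecidablePred W] :
    (∑ a ∈ univ.filter (fun a : ∀ i, D i => W a ∧ a C = c), ∏ i, cpt i (fun j => a j.1) (a i))
        / ∑ a ∈ univ.filter (fun a : ∀ i, D i => a C = c), ∏ i, cpt i (fun j => a j.1) (a i)
      = ∑ a ∈ univ.filter (fun a : ∀ i, D i => W a ∧ a C = c),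
          ∏ i ∈ univ.erase C, cpt i (fun j => a j.1) (a i) := by
  rw [sum_filter_prod_cpt_eq_mul_sum_prod_erase cpt hC p c _ fun _ h => h.2,
    sum_filter_prod_cpt_eq_mul_sum_prod_erase cpt hC p c _ fun _ h => h,
    sum_filter_apply_eq_prod_erase_eq_one cpt hpa hsum, mul_one, mul_div_cancel_left₀ _ hc]

end BayesNet

theorem bn_total_effect_eq_risk_difference_general {n : ℕ} (D : Fin n → Type)
    [∀ i, Fintype (D i)] [∀ i, Nonempty (D i)] [∀ i, DecidableEq (D i)]
    (pa : Fin n → Finset (Fin n))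
    (hpa : ∀ i : Fin n, ∀ j ∈ pa i, j < i)
    (cpt : ∀ i : Fin n, ((j : {x // x ∈ pa i}) → D j.1) → D i → ℝ)
    (hsum : ∀ i p, ∑ x : D i, cpt i p x = 1)
    (C : Fin n) (hC : pa C = ∅)
    (E : Fin n)
    (cplus cminus : D C) (eplus : D E)
    (p : (j : {x // x ∈ pa C}) → D j.1)
    (hplus : 0 < cpt C p cplus) (hminus : 0 < cpt C p cminus) :
    (∑ a ∈ Finset.univ.filter (fun a : ∀ i, D i => a E = eplus ∧ a C = cplus),
        ∏ i ∈ Finset.univ.erase C, cpt i (fun j => a j.1) (a i))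
      - (∑ a ∈ Finset.univ.filter (fun a : ∀ i, D i => a E = eplus ∧ a C = cminus),
          ∏ i ∈ Finset.univ.erase C, cpt i (fun j => a j.1) (a i))
    = (∑ a ∈ Finset.univ.filter (fun a : ∀ i, D i => a E = eplus ∧ a C = cplus),
          ∏ i : Fin n, cpt i (fun j => a j.1) (a i))
        / (∑ a ∈ Finset.univ.filter (fun a : ∀ i, D i => a C = cplus),
            ∏ i : Fin n, cpt i (fun j => a j.1) (a i))
      - (∑ a ∈ Finset.univ.filter (fun a : ∀ i, D i => a E = eplus ∧ a C = cminus),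
            ∏ i : Fin n, cpt i (fun j => a j.1) (a i))
          / (∑ a ∈ Finset.univ.filter (fun a : ∀ i, D i => a C = cminus),
              ∏ i : Fin n, cpt i (fun j => a j.1) (a i)) := by
  rw [BayesNet.div_sum_filter_apply_eq_sum_prod_erase_of_pa_eq_empty cpt hpa hsum hC p hplus.ne'
      (fun a => a E = eplus),
    BayesNet.div_sum_filter_apply_eq_sum_prod_erase_of_pa_eq_empty cpt hpa hsum hC p hminus.ne'
      (fun a => a E = eplus)]

/-- The total causal effect equals the risk difference when the protected
attribute has no parents: for a node `C` with `pa C = ∅`, a node `E ≠ C`, values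
`c⁺, c⁻ : D C` with positive table entries (with `p` the trivial parent
assignment), and `e⁺ : D E`, the total effect
`TE(c⁺, c⁻) = P({a | a E = e⁺} | do(C = c⁺)) − P({a | a E = e⁺} | do(C = c⁻))`
(computed by the truncated factorization formula) equals
`P(E = e⁺ | C = c⁺) − P(E = e⁺ | C = c⁻)` (risk difference, computed with the
joint distribution of the Bayesian network). -/
theorem bn_total_effect_eq_risk_difference {n : ℕ} (D : Fin n → Type)
    [∀ i, Fintype (D i)] [∀ i, Nonempty (D i)] [∀ i, DecidableEq (D i)]
    (pa : Fin n → Finset (Fin n))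
    (hpa : ∀ i : Fin n, ∀ j ∈ pa i, j < i)
    (cpt : ∀ i : Fin n, ((j : {x // x ∈ pa i}) → D j.1) → D i → ℝ)
    (hnn : ∀ i p x, 0 ≤ cpt i p x)
    (hsum : ∀ i p, ∑ x : D i, cpt i p x = 1)
    (C : Fin n) (hC : pa C = ∅)
    (E : Fin n) (hEC : E ≠ C)
    (cplus cminus : D C) (eplus : D E)
    (p : (j : {x // x ∈ pa C}) → D j.1)
    (hplus : 0 < cpt C p cplus) (hminus : 0 < cpt C p cminus) :
    (∑ a ∈ Finset.univ.filter (fun a : ∀ i, D i => a E = eplus ∧ a C = cplus),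
        ∏ i ∈ Finset.univ.erase C, cpt i (fun j => a j.1) (a i))
      - (∑ a ∈ Finset.univ.filter (fun a : ∀ i, D i => a E = eplus ∧ a C = cminus),
          ∏ i ∈ Finset.univ.erase C, cpt i (fun j => a j.1) (a i))
    = (∑ a ∈ Finset.univ.filter (fun a : ∀ i, D i => a E = eplus ∧ a C = cplus),
          ∏ i : Fin n, cpt i (fun j => a j.1) (a i))
        / (∑ a ∈ Finset.univ.filter (fun a : ∀ i, D i => a C = cplus),
            ∏ i : Fin n, cpt i (fun j => a j.1) (a i))
      - (∑ a ∈ Finset.univ.filter (fun a : ∀ i, D i => a E = eplus ∧ a C = cminus),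
            ∏ i : Fin n, cpt i (fun j => a j.1) (a i))
          / (∑ a ∈ Finset.univ.filter (fun a : ∀ i, D i => a C = cminus),
              ∏ i : Fin n, cpt i (fun j => a j.1) (a i)) :=
  bn_total_effect_eq_risk_difference_general D pa hpa cpt hsum C hC E cplus cminus eplus p hplus
    hminus
end

section
/- When the effect is transmitted along all paths, the path-specific substitution formula reduces to the total causal effect: let C be a node with pa C = ∅, E a node distinct from C, c⁺, c⁻ : D C and e⁺ : D E. Then ∑ over full assignments a with a E = e⁺ and a C = c⁻ of [ ∏_{G with C ∈ pa G} cpt G ((a restricted to pa G) with its C-coordinate replaced by c⁺) (a G) · ∏_{O ≠ C with C ∉ pa O} cpt O (a restricted to pa O) (a O) ] equals P({a | a E = e⁺} | do(C = c⁺)); consequently this substituted sum minus P({a | a E = e⁺} | do(C = c⁻)) equals TE(c⁺, c⁻) = P({a | a E = e⁺} | do(C = c⁺)) − P({a | a E = e⁺} | do(C = c⁻)). -/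
/-- The parent assignment of node `G` induced by the full assignment `a`, with
the coordinate corresponding to `C` (if `C ∈ pa G`) replaced by the value `c`. -/
def substC {n : ℕ} (D : Fin n → Type) (pa : Fin n → Finset (Fin n)) (C : Fin n)
    (c : D C) (a : ∀ i, D i) (G : Fin n) : (j : {x // x ∈ pa G}) → D j.1 :=
  fun j => if h : j.1 = C then cast (congrArg D h).symm c else a j.1

/-- When the effect is transmitted along all causal paths, the path-specific
substitution formula reduces to the total causal effect: for a parentless node
`C`, a node `E ≠ C`, values `c⁺, c⁻ : D C` and `e⁺ : D E`, the sum over full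
assignments `a` with `a E = e⁺` and `a C = c⁻` of the product in which every
child `G` of `C` (i.e. `C ∈ pa G`) has the `C`-coordinate of its parent
assignment replaced by `c⁺` while every other node `O ≠ C` with `C ∉ pa O` keeps
`a`, equals `P({a | a E = e⁺} | do(C = c⁺))`; consequently this substituted sum
minus `P({a | a E = e⁺} | do(C = c⁻))` equals
`TE(c⁺, c⁻) = P({a | a E = e⁺} | do(C = c⁺)) − P({a | a E = e⁺} | do(C = c⁻))`. -/
theorem bn_path_specific_all_paths_eq_total_effect {n : ℕ} (D : Fin n → Type)
    [∀ i, Fintype (D i)] [∀ i, Nonempty (D i)] [∀ i, DecidableEq (D i)]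
    (pa : Fin n → Finset (Fin n))
    (hpa : ∀ i : Fin n, ∀ j ∈ pa i, j < i)
    (cpt : ∀ i : Fin n, ((j : {x // x ∈ pa i}) → D j.1) → D i → ℝ)
    (hnn : ∀ i p x, 0 ≤ cpt i p x)
    (hsum : ∀ i p, ∑ x : D i, cpt i p x = 1)
    (C : Fin n) (hC : pa C = ∅)
    (E : Fin n) (hEC : E ≠ C)
    (cplus cminus : D C) (eplus : D E) :
    (∑ a ∈ Finset.univ.filter (fun a : ∀ i, D i => a E = eplus ∧ a C = cminus),
        (∏ G ∈ Finset.univ.filter (fun G : Fin n => C ∈ pa G),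
            cpt G (substC D pa C cplus a G) (a G)) *
          (∏ O ∈ Finset.univ.filter (fun O : Fin n => O ≠ C ∧ C ∉ pa O),
              cpt O (fun j => a j.1) (a O)))
      = ∑ a ∈ Finset.univ.filter (fun a : ∀ i, D i => a E = eplus ∧ a C = cplus),
          ∏ i ∈ Finset.univ.erase C, cpt i (fun j => a j.1) (a i)
    ∧
    (∑ a ∈ Finset.univ.filter (fun a : ∀ i, D i => a E = eplus ∧ a C = cminus),
        (∏ G ∈ Finset.univ.filter (fun G : Fin n => C ∈ pa G),
            cpt G (substC D pa C cplus a G) (a G)) *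
          (∏ O ∈ Finset.univ.filter (fun O : Fin n => O ≠ C ∧ C ∉ pa O),
              cpt O (fun j => a j.1) (a O)))
      - (∑ a ∈ Finset.univ.filter (fun a : ∀ i, D i => a E = eplus ∧ a C = cminus),
          ∏ i ∈ Finset.univ.erase C, cpt i (fun j => a j.1) (a i))
    = (∑ a ∈ Finset.univ.filter (fun a : ∀ i, D i => a E = eplus ∧ a C = cplus),
          ∏ i ∈ Finset.univ.erase C, cpt i (fun j => a j.1) (a i))
      - (∑ a ∈ Finset.univ.filter (fun a : ∀ i, D i => a E = eplus ∧ a C = cminus),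
          ∏ i ∈ Finset.univ.erase C, cpt i (fun j => a j.1) (a i)) := by
  have key :
      (∑ a ∈ Finset.univ.filter (fun a : ∀ i, D i => a E = eplus ∧ a C = cminus),
        (∏ G ∈ Finset.univ.filter (fun G : Fin n => C ∈ pa G),
            cpt G (substC D pa C cplus a G) (a G)) *
          (∏ O ∈ Finset.univ.filter (fun O : Fin n => O ≠ C ∧ C ∉ pa O),
              cpt O (fun j => a j.1) (a O)))
      = ∑ a ∈ Finset.univ.filter (fun a : ∀ i, D i => a E = eplus ∧ a C = cplus),
          ∏ i ∈ Finset.univ.erase C, cpt i (fun j => a j.1) (a i) := by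
    refine Finset.sum_nbij' (fun a => Function.update a C cplus)
      (fun b => Function.update b C cminus) ?_ ?_ ?_ ?_ ?_
    · intro a ha
      simp only [Finset.mem_filter, Finset.mem_univ, true_and] at ha ⊢
      exact ⟨by rw [Function.update_of_ne hEC]; exact ha.1, Function.update_self _ _ _⟩
    · intro b hb
      simp only [Finset.mem_filter, Finset.mem_univ, true_and] at hb ⊢
      exact ⟨by rw [Function.update_of_ne hEC]; exact hb.1, Function.update_self _ _ _⟩
    · intro a ha
      simp only [Finset.mem_filter, Finset.mem_univ, true_and] at ha
      funext i
      by_cases hi : i = C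
      · subst hi; simp [ha.2]
      · simp [Function.update_of_ne hi]
    · intro b hb
      simp only [Finset.mem_filter, Finset.mem_univ, true_and] at hb
      funext i
      by_cases hi : i = C
      · subst hi; simp [hb.2]
      · simp [Function.update_of_ne hi]
    · intro a ha
      simp only [Finset.mem_filter, Finset.mem_univ, true_and] at ha
      beta_reduce
      set b := Function.update a C cplus with hbdef
      have hb : ∀ i, i ≠ C → b i = a i := fun i hi => Function.update_of_ne hi _ _
      have hsplit : Finset.univ.erase C =
          (Finset.univ.filter (fun G : Fin n => C ∈ pa G)) ∪
          (Finset.univ.filter (fun O : Fin n => O ≠ C ∧ C ∉ pa O)) := by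
        ext i
        simp only [Finset.mem_erase, Finset.mem_union, Finset.mem_filter, Finset.mem_univ,
          true_and, and_true]
        constructor
        · intro hi
          by_cases h : C ∈ pa i
          · exact Or.inl h
          · exact Or.inr ⟨hi, h⟩
        · rintro (h | ⟨hi, _⟩)
          · intro hiC; subst hiC; rw [hC] at h; exact absurd h (by simp)
          · exact hi
      have hdisj : Disjoint (Finset.univ.filter (fun G : Fin n => C ∈ pa G))
          (Finset.univ.filter (fun O : Fin n => O ≠ C ∧ C ∉ pa O)) := by
        rw [Finset.disjoint_filter]
        intro i _ h1 h2
        exact h2.2 h1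
      rw [hsplit, Finset.prod_union hdisj]
      congr 1
      · apply Finset.prod_congr rfl
        intro G hG
        simp only [Finset.mem_filter, Finset.mem_univ, true_and] at hG
        have hGC : G ≠ C := fun h => by subst h; rw [hC] at hG; exact absurd hG (by simp)
        rw [hb G hGC]
        congr 1
        funext j
        unfold substC
        by_cases hj : j.1 = C
        · rw [dif_pos hj, hbdef]
          subst hj
          simp
        · rw [dif_neg hj, hb j.1 hj]
      · apply Finset.prod_congr rfl
        intro O hO
        simp only [Finset.mem_filter, Finset.mem_univ, true_and] at hO
        rw [hb O hO.1]
        congr 1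
        funext j
        exact (hb j.1 (fun h => hO.2 (h ▸ j.2))).symm
  exact ⟨key, by rw [key]⟩
end
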